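/- arXiv:1908.08067 — 2 statements merged into one kernel-verified Lean document; each statement's English description precedes it below -/
import Mathlib

section
/- Let s ≥ 2 and let P_1, …, P_s be n×n complex matrices that are Hermitian (self-adjoint), satisfy P_j² = 1 for every j, and pairwise anticommute (P_j P_k + P_k P_j = 0 for j ≠ k). Let β_1, …, β_s be real numbers with Σ_j β_j² = 1. Then there exists a unitary n×n matrix R such that R · (Σ_j β_j P_j) · R† = P_s. (Unitary partitioning: any normalized linear combination over a completely anticommuting set of self-adjoint self-inverse operators is unitarily mapped to a single member of the set.) -/
open Finset Matrix

/-- Unitary partitioning: any normalized real linear combination over a completely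
anticommuting set of Hermitian self-inverse matrices is unitarily mapped to a single
member of the set. -/
theorem unitary_partitioning_exists {n s : ℕ} (hs : 2 ≤ s)
    (P : Fin s → Matrix (Fin n) (Fin n) ℂ) (β : Fin s → ℝ)
    (hHerm : ∀ j, (P j).IsHermitian)
    (hsq : ∀ j, P j * P j = 1)
    (hanti : ∀ j k, j ≠ k → P j * P k + P k * P j = 0)
    (hnorm : ∑ j, (β j) ^ 2 = 1) :
    ∃ R : Matrix (Fin n) (Fin n) ℂ,
      R * Rᴴ = 1 ∧ Rᴴ * R = 1 ∧
      R * (∑ j, (β j : ℂ) • P j) * Rᴴ = P ⟨s - 1, by omega⟩ := by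
  set i : Fin s := ⟨s - 1, by omega⟩ with hi
  set A : Matrix (Fin n) (Fin n) ℂ := ∑ j, (β j : ℂ) • P j with hA
  -- A is Hermitian
  have hAH : Aᴴ = A := by
    rw [hA, conjTranspose_sum]
    refine Finset.sum_congr rfl fun j _ => ?_
    rw [conjTranspose_smul, (hHerm j).eq]
    simp [Complex.conj_ofReal]
  -- A * A = 1
  have hA2 : A * A = 1 := by
    have expand : A * A = ∑ p ∈ (Finset.univ ×ˢ Finset.univ : Finset (Fin s × Fin s)),
        ((β p.1 : ℂ) * (β p.2 : ℂ)) • (P p.1 * P p.2) := by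
      rw [hA, Finset.sum_mul_sum, Finset.sum_product]
      refine Finset.sum_congr rfl fun j _ => Finset.sum_congr rfl fun k _ => ?_
      rw [smul_mul_smul_comm]
    rw [expand, ← Finset.diag_union_offDiag (Finset.univ : Finset (Fin s)),
      Finset.sum_union (Finset.disjoint_diag_offDiag _)]
    have hdiag : ∑ p ∈ (Finset.univ : Finset (Fin s)).diag,
        ((β p.1 : ℂ) * (β p.2 : ℂ)) • (P p.1 * P p.2) = 1 := by
      rw [Finset.sum_diag]
      have : ∀ j : Fin s, ((β j : ℂ) * (β j : ℂ)) • (P j * P j)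
          = (((β j) ^ 2 : ℝ) : ℂ) • (1 : Matrix (Fin n) (Fin n) ℂ) := by
        intro j; rw [hsq j]; push_cast; ring_nf
      simp only [this]
      rw [← Finset.sum_smul, ← Complex.ofReal_sum, hnorm]
      simp
    have hoff : ∑ p ∈ (Finset.univ : Finset (Fin s)).offDiag,
        ((β p.1 : ℂ) * (β p.2 : ℂ)) • (P p.1 * P p.2) = 0 := by
      refine Finset.sum_involution (fun p _ => (p.2, p.1)) ?_ ?_ ?_ ?_
      · intro p hp
        have hne : p.1 ≠ p.2 := (Finset.mem_offDiag.mp hp).2.2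
        simp only
        rw [mul_comm ((β p.2 : ℂ)) ((β p.1 : ℂ)), ← smul_add, hanti p.1 p.2 hne, smul_zero]
      · intro p hp _
        have hne : p.1 ≠ p.2 := (Finset.mem_offDiag.mp hp).2.2
        intro hc
        exact hne ((congrArg Prod.fst hc).symm)
      · intro p hp
        have hm := Finset.mem_offDiag.mp hp
        exact Finset.mem_offDiag.mpr ⟨hm.2.1, hm.1, hm.2.2.symm⟩
      · intro p hp; rfl
    rw [hdiag, hoff, add_zero]
  -- A * P i + P i * A = (2 β i) • 1
  have hAP : A * P i + P i * A = ((2 * β i : ℝ) : ℂ) • 1 := by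
    rw [hA, Finset.sum_mul, Finset.mul_sum]
    simp only [smul_mul_assoc, mul_smul_comm]
    rw [← Finset.sum_add_distrib]
    rw [Finset.sum_eq_single i]
    · rw [← smul_add, hsq i]
      push_cast
      module
    · intro j _ hj
      rw [← smul_add, hanti j i hj, smul_zero]
    · intro h; exact absurd (Finset.mem_univ i) h
  by_cases hb : β i = -1
  · -- degenerate case: A = - P i
    have hother : ∀ j, j ≠ i → β j = 0 := by
      intro j hj
      have h1 : ∑ k ∈ Finset.univ.erase i, (β k) ^ 2 = 0 := by
        have t : (β i) ^ 2 + ∑ k ∈ Finset.univ.erase i, (β k) ^ 2 = 1 :=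
          (Finset.add_sum_erase _ (fun k => (β k) ^ 2) (Finset.mem_univ i)).trans hnorm
        rw [hb] at t
        simp only [neg_one_sq] at t
        linarith
      have h2 : (β j) ^ 2 = 0 := by
        have hnn : ∀ k ∈ Finset.univ.erase i, (0:ℝ) ≤ (β k) ^ 2 := fun k _ => sq_nonneg _
        have := (Finset.sum_eq_zero_iff_of_nonneg hnn).mp h1 j
          (Finset.mem_erase.mpr ⟨hj, Finset.mem_univ j⟩)
        exact this
      exact pow_eq_zero_iff (two_ne_zero) |>.mp h2
    have hAeq : A = -(P i) := by
      rw [hA, Finset.sum_eq_single i]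
      · rw [hb]; push_cast; simp
      · intro j _ hj
        rw [hother j hj]; simp
      · intro h; exact absurd (Finset.mem_univ i) h
    set j0 : Fin s := ⟨0, by omega⟩ with hj0
    have hi0 : j0 ≠ i := by
      intro h
      have : (0 : ℕ) = s - 1 := congrArg Fin.val h
      omega
    refine ⟨P j0, ?_, ?_, ?_⟩
    · rw [(hHerm j0).eq, hsq j0]
    · rw [(hHerm j0).eq, hsq j0]
    · rw [hAeq, (hHerm j0).eq]
      have h1 : P j0 * P i = -(P i * P j0) :=
        eq_neg_of_add_eq_zero_left (hanti j0 i hi0)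
      calc P j0 * -(P i) * P j0 = -(P j0 * P i) * P j0 := by noncomm_ring
        _ = (P i * P j0) * P j0 := by rw [h1, neg_neg]
        _ = P i * (P j0 * P j0) := by rw [mul_assoc]
        _ = P i := by rw [hsq j0, mul_one]
  · -- main case: β i ≠ -1
    have hble : (β i) ^ 2 ≤ 1 := by
      rw [← hnorm]
      exact Finset.single_le_sum (fun k _ => sq_nonneg (β k)) (Finset.mem_univ i)
    have hbge : -1 ≤ β i := by nlinarith
    have hbgt : -1 < β i := lt_of_le_of_ne hbge (fun h => hb h.symm)
    set c : ℝ := 2 + 2 * β i with hc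
    have hcpos : 0 < c := by rw [hc]; linarith
    set r : ℝ := Real.sqrt c with hr
    have hrpos : 0 < r := Real.sqrt_pos.mpr hcpos
    have hrr : r * r = c := Real.mul_self_sqrt hcpos.le
    set R : Matrix (Fin n) (Fin n) ℂ := ((r⁻¹ : ℝ) : ℂ) • (A + P i) with hR
    have hRH : Rᴴ = R := by
      rw [hR, conjTranspose_smul, conjTranspose_add, hAH, (hHerm i).eq]
      congr 1
      simp [Complex.conj_ofReal]
    have hsum2 : (A + P i) * (A + P i) = ((c : ℝ) : ℂ) • 1 := by
      have : (A + P i) * (A + P i) = A * A + (A * P i + P i * A) + P i * P i := by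
        noncomm_ring
      rw [this, hA2, hAP, hsq i, hc]
      push_cast
      module
    have hscalR : r⁻¹ * r⁻¹ * c = 1 := by
      rw [← hrr]
      field_simp
    have hscal : ((r⁻¹ : ℝ) : ℂ) * ((r⁻¹ : ℝ) : ℂ) * ((c : ℝ) : ℂ) = 1 := by
      rw [← Complex.ofReal_one, ← hscalR]
      push_cast
      ring
    have hRR : R * R = 1 := by
      rw [hR, smul_mul_assoc, mul_smul_comm, hsum2, smul_smul, smul_smul, hscal, one_smul]
    refine ⟨R, ?_, ?_, ?_⟩
    · rw [hRH, hRR]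
    · rw [hRH, hRR]
    · rw [hRH]
      have hPA : P i * A = ((2 * β i : ℝ) : ℂ) • 1 - A * P i :=
        eq_sub_of_add_eq' hAP
      have hmid : (A + P i) * A * (A + P i) = ((c : ℝ) : ℂ) • P i := by
        have expand : (A + P i) * A * (A + P i)
            = A * A * A + A * A * P i + P i * A * A + P i * A * P i := by
          noncomm_ring
        have h1 : A * A * A = A := by rw [hA2, one_mul]
        have h2 : A * A * P i = P i := by rw [hA2, one_mul]
        have h3 : P i * A * A = P i := by rw [mul_assoc, hA2, mul_one]
        have h4 : P i * A * P i = ((2 * β i : ℝ) : ℂ) • P i - A := by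
          rw [hPA, sub_mul, smul_mul_assoc, one_mul, mul_assoc, hsq i, mul_one]
        rw [expand, h1, h2, h3, h4, hc]
        push_cast
        module
      rw [hR, smul_mul_assoc, smul_mul_assoc, mul_smul_comm, hmid, smul_smul, smul_smul,
        hscal, one_smul]
end

section
/- Let T be a finite set, let R be a symmetric relation on T, and let C_1, …, C_N be pairwise disjoint nonempty finite sets whose union is T, such that x R y whenever x ∈ C_i, y ∈ C_j with i ≠ j (elements of different cliques are related). Let M = max_i |C_i| and assume |C_1| = M. Then there exist pairwise disjoint sets D_1, …, D_M whose union is T such that |D_j ∩ C_i| ≤ 1 for all i, j and |D_j ∩ C_1| = 1 for all j; consequently every pair of distinct elements of each D_j satisfies R, i.e. each D_j is a completely R-related (completely anticommuting) set that meets the largest clique C_1 in exactly one element. (This is the construction reducing any noncontextual Hamiltonian to a commuting Hamiltonian.) -/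
open Finset

/-! Number the elements of each clique `C i` by `0, …, |C i| - 1`; since the cliques are disjoint
this is a single function `rank : α → ℕ` taking values below `M`. Let `D j` be the set of elements
of rank `j`. Within a clique ranks are distinct, so `D j` meets each clique at most once and any two
of its elements lie in different cliques, hence are related. Since `|C 1| = M`, every rank `j < M`
is attained in `C 1`. -/

theorem Finset.bijOn_idxOf_toList {α : Type*} [DecidableEq α] (s : Finset α) :
    Set.BijOn (s.toList.idxOf ·) s (Set.Iio #s) := by
  refine ⟨fun x hx => ?_, fun x hx y _ hxy => ?_, fun n hn => ?_⟩
  · simpa [← Finset.length_toList] using List.idxOf_lt_length_iff.2 (mem_toList.2 hx)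
  · exact (List.idxOf_inj (mem_toList.2 hx)).1 hxy
  · have hn : n < s.toList.length := by simpa using hn
    exact ⟨s.toList[n], mem_toList.1 (List.getElem_mem hn),
      s.nodup_toList.idxOf_getElem n hn⟩

open Function in
theorem exists_bijOn_Iio_card_of_pairwise_disjoint {ι α : Type*} [DecidableEq α]
    (C : ι → Finset α) (hC : Pairwise (Disjoint on C)) :
    ∃ rank : α → ℕ, ∀ i, Set.BijOn rank (C i) (Set.Iio #(C i)) := by
  classical
  refine ⟨fun x => if h : ∃ i, x ∈ C i then (C h.choose).toList.idxOf x else 0, fun i => ?_⟩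
  refine (C i).bijOn_idxOf_toList.congr fun x hx => ?_
  have h : ∃ i, x ∈ C i := ⟨i, hx⟩
  have hi : h.choose = i := by
    by_contra hne
    exact disjoint_left.1 (hC hne) h.choose_spec hx
  simp only [dif_pos h, hi]

theorem card_filter_eq_inter_le_one {α β : Type*} [DecidableEq α] [DecidableEq β]
    {s : Finset α} {f : α → β} (hf : Set.InjOn f s) (t : Finset α) (b : β) :
    #({x ∈ t | f x = b} ∩ s) ≤ 1 := by
  refine card_le_one.2 fun x hx y hy => ?_
  simp only [mem_inter, mem_filter] at hx hy
  exact hf hx.2 hy.2 (hx.1.2.trans hy.1.2.symm)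

theorem card_filter_eq_inter_eq_one {α β : Type*} [DecidableEq α] [DecidableEq β]
    {s t : Finset α} {u : Set β} {f : α → β} (hf : Set.BijOn f s u) (hst : s ⊆ t) {b : β}
    (hb : b ∈ u) : #({x ∈ t | f x = b} ∩ s) = 1 := by
  obtain ⟨x, hx, rfl⟩ := hf.surjOn hb
  refine le_antisymm (card_filter_eq_inter_le_one hf.injOn t _) (one_le_card.2 ⟨x, ?_⟩)
  simp [mem_coe.1 hx, hst hx]

theorem noncontextual_hitting_set_partition_general {α : Type*} [DecidableEq α]
    (T : Finset α) (R : α → α → Prop)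
    (N : ℕ) (hN : 1 ≤ N) (C : Fin N → Finset α)
    (hCdisj : ∀ i j, i ≠ j → Disjoint (C i) (C j))
    (hCcover : (univ : Finset (Fin N)).biUnion C = T)
    (hRcross : ∀ i j, i ≠ j → ∀ x ∈ C i, ∀ y ∈ C j, R x y)
    (M : ℕ) (hM : M = (univ : Finset (Fin N)).sup (fun i => (C i).card))
    (hC1max : (C ⟨0, hN⟩).card = M) :
    ∃ D : Fin M → Finset α,
      (∀ j j', j ≠ j' → Disjoint (D j) (D j')) ∧
      (univ : Finset (Fin M)).biUnion D = T ∧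
      (∀ j i, (D j ∩ C i).card ≤ 1) ∧
      (∀ j, (D j ∩ C ⟨0, hN⟩).card = 1) ∧
      (∀ j, ∀ x ∈ D j, ∀ y ∈ D j, x ≠ y → R x y) := by
  obtain ⟨rank, hrank⟩ := exists_bijOn_Iio_card_of_pairwise_disjoint C hCdisj
  have hclique : ∀ x ∈ T, ∃ i, x ∈ C i := by simp [← hCcover]
  have hrank_lt : ∀ x ∈ T, rank x < M := fun x hx => by
    obtain ⟨i, hi⟩ := hclique x hx
    exact ((hrank i).mapsTo hi).trans_le (hM ▸ le_sup (f := fun i => #(C i)) (mem_univ i))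
  refine ⟨fun j => {x ∈ T | rank x = j}, fun j j' hne => ?_, ?_, fun j i => ?_, fun j => ?_,
    fun j x hx y hy hxy => ?_⟩
  · exact disjoint_filter.2 fun x _ hx hx' => hne (Fin.ext (hx.symm.trans hx'))
  · ext x
    simpa using fun hx => ⟨⟨rank x, hrank_lt x hx⟩, rfl⟩
  · exact card_filter_eq_inter_le_one (hrank i).injOn T j
  · refine card_filter_eq_inter_eq_one (hrank _) (hCcover ▸ subset_biUnion_of_mem C (mem_univ _)) ?_
    simp [hC1max]
  · simp only [mem_filter] at hx hy
    obtain ⟨i, hi⟩ := hclique x hx.1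
    obtain ⟨i', hi'⟩ := hclique y hy.1
    refine hRcross i i' (fun h => hxy ?_) x hi y hi'
    subst h
    exact (hrank i).injOn hi hi' (hx.2.trans hy.2.symm)

/-- Reduction of a noncontextual Hamiltonian to a commuting Hamiltonian: if the finite
set `T` partitions into disjoint nonempty cliques `C 1, …, C N` with elements of
different cliques related by the symmetric relation `R`, and `C 1` is a largest clique
of size `M`, then `T` partitions into `M` disjoint sets `D j`, each meeting every clique
at most once and the largest clique exactly once; consequently each `D j` is completely
`R`-related. -/
theorem noncontextual_hitting_set_partition {α : Type*} [DecidableEq α]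
    (T : Finset α) (R : α → α → Prop) (hRsymm : ∀ x y, R x y → R y x)
    (N : ℕ) (hN : 1 ≤ N) (C : Fin N → Finset α)
    (hCne : ∀ i, (C i).Nonempty)
    (hCdisj : ∀ i j, i ≠ j → Disjoint (C i) (C j))
    (hCcover : (univ : Finset (Fin N)).biUnion C = T)
    (hRcross : ∀ i j, i ≠ j → ∀ x ∈ C i, ∀ y ∈ C j, R x y)
    (M : ℕ) (hM : M = (univ : Finset (Fin N)).sup (fun i => (C i).card))
    (hC1max : (C ⟨0, hN⟩).card = M) :
    ∃ D : Fin M → Finset α,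
      (∀ j j', j ≠ j' → Disjoint (D j) (D j')) ∧
      (univ : Finset (Fin M)).biUnion D = T ∧
      (∀ j i, (D j ∩ C i).card ≤ 1) ∧
      (∀ j, (D j ∩ C ⟨0, hN⟩).card = 1) ∧
      (∀ j, ∀ x ∈ D j, ∀ y ∈ D j, x ≠ y → R x y) :=
  noncontextual_hitting_set_partition_general T R N hN C hCdisj hCcover hRcross M hM hC1max
end
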